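/- arXiv:2306.14236 — 6 statements merged into one kernel-verified Lean document; each statement's English description precedes it below -/
import Mathlib

section
/- Let M ⊆ 𝔽₂ⁿ \ {0} be a finite set with rank r, and let c ≥ 2 be an integer. If M contains no circuit of size larger than c, then |M| ≤ ∑_{i=1}^{c-1} binom(r, i). -/
open Finset

/-- A circuit: a minimal nonempty subset of the ambient group minus `{0}` with zero sum. -/
def IsCircuit {V : Type*} [AddCommGroup V] [DecidableEq V] (C : Finset V) : Prop :=
  C.Nonempty ∧ (0 : V) ∉ C ∧ ∑ x ∈ C, x = 0 ∧
    ∀ D ⊆ C, D.Nonempty → ∑ x ∈ D, x = 0 → D = C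
/-- rank: maximum size of a linearly independent subset of `M`. -/
noncomputable def rk {n : ℕ} (M : Finset (Fin n → ZMod 2)) : ℕ :=
  sSup {k : ℕ | ∃ s ⊆ M, s.card = k ∧
    LinearIndependent (ZMod 2) (fun x : s => (x : Fin n → ZMod 2))}

/-!
Take a linearly independent `B ⊆ M` with `|B| = r`; by maximality it spans `M`. Over `𝔽₂` every
`x ∈ M` is the sum of a subset `T x ⊆ B`, which is nonempty as `x ≠ 0`, and `x ↦ T x` is injective.
If `x ∉ T x` then `insert x (T x)` is a circuit of `M`, so `|T x| ≤ c - 1`; otherwise `T x = {x}`.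
Hence `M` injects into the subsets of `B` of size between `1` and `c - 1`.
-/

section Independence

variable {R V : Type*} [Ring R] [Nontrivial R] [AddCommGroup V] [Module R V] {B D : Finset V}

theorem LinearIndepOn.finset_eq_empty_of_sum_eq_zero (hB : LinearIndepOn R id (B : Set V))
    (hDB : D ⊆ B) (hD : ∑ x ∈ D, x = 0) : D = ∅ :=
  eq_empty_of_forall_notMem fun x hx => one_ne_zero (α := R) <|
    linearIndepOn_finset_iff.1 (hB.mono (coe_subset.2 hDB)) (fun _ => 1) (by simpa using hD) x hx

theorem LinearIndepOn.finset_eq_singleton_of_sum_eq [DecidableEq V] {x : V}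
    (hB : LinearIndepOn R id (B : Set V)) (hDB : D ⊆ B) (hxD : x ∈ D) (hD : ∑ v ∈ D, v = x) :
    D = {x} := by
  have hrest : ∑ v ∈ D \ {x}, v = 0 := by
    rw [sum_sdiff_eq_sub (singleton_subset_iff.2 hxD), hD, sum_singleton, sub_self]
  have := hB.finset_eq_empty_of_sum_eq_zero (sdiff_subset.trans hDB) hrest
  exact (sdiff_eq_empty_iff_subset.1 this).antisymm (singleton_subset_iff.2 hxD)

end Independence

section CharTwo

variable {V : Type*} [AddCommGroup V] [Module (ZMod 2) V]

theorem Submodule.exists_subset_sum_eq_of_mem_span {B : Finset V} {x : V}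
    (hx : x ∈ Submodule.span (ZMod 2) (B : Set V)) : ∃ T ⊆ B, ∑ v ∈ T, v = x := by
  classical
  obtain ⟨f, -, rfl⟩ := Submodule.mem_span_finset.1 hx
  refine ⟨B.filter (f · = 1), filter_subset _ _, ?_⟩
  rw [sum_filter]
  refine sum_congr rfl fun v _ => ?_
  rcases (by decide : ∀ a : ZMod 2, a = 0 ∨ a = 1) (f v) with h | h <;> simp [h]

theorem LinearIndepOn.isCircuit_insert [DecidableEq V] {B T : Finset V} {x : V}
    (hB : LinearIndepOn (ZMod 2) id (B : Set V)) (hTB : T ⊆ B) (hxT : x ∉ T) (hx : x ≠ 0)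
    (hT : ∑ v ∈ T, v = x) : IsCircuit (insert x T) := by
  have hsum : ∑ v ∈ insert x T, v = 0 := by
    rw [sum_insert hxT, hT, ← two_smul (ZMod 2) x]
    exact (show (2 : ZMod 2) = 0 from rfl) ▸ zero_smul _ x
  refine ⟨insert_nonempty x T, fun h0 => ?_, hsum, fun E hE hEne hEsum => ?_⟩
  · rcases mem_insert.1 h0 with h | h
    · exact hx h.symm
    · exact hB.zero_notMem_image ⟨0, hTB h, rfl⟩
  by_cases hxE : x ∈ E
  · have hcompl : insert x T \ E ⊆ B := fun v hv => by
      rcases mem_insert.1 (mem_sdiff.1 hv).1 with rfl | hvT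
      · exact absurd hxE (mem_sdiff.1 hv).2
      · exact hTB hvT
    have := hB.finset_eq_empty_of_sum_eq_zero hcompl
      (by rw [sum_sdiff_eq_sub hE, hsum, hEsum, sub_zero])
    exact hE.antisymm (sdiff_eq_empty_iff_subset.1 this)
  · have hEB : E ⊆ B := fun v hv =>
      hTB <| (mem_insert.1 (hE hv)).resolve_left (by rintro rfl; exact hxE hv)
    exact absurd (hB.finset_eq_empty_of_sum_eq_zero hEB hEsum) hEne.ne_empty

end CharTwo

theorem exists_linearIndepOn_card_eq_rk {n : ℕ} (M : Finset (Fin n → ZMod 2)) :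
    ∃ B ⊆ M, B.card = rk M ∧ LinearIndepOn (ZMod 2) id (B : Set (Fin n → ZMod 2)) ∧
      ∀ x ∈ M, x ∈ Submodule.span (ZMod 2) (B : Set (Fin n → ZMod 2)) := by
  classical
  set S := {k : ℕ | ∃ s ⊆ M, s.card = k ∧
    LinearIndependent (ZMod 2) (fun x : s => (x : Fin n → ZMod 2))}
  have hbdd : BddAbove S := ⟨M.card, fun k ⟨s, hs, hk, _⟩ => hk ▸ card_le_card hs⟩
  obtain ⟨B, hBM, hBcard, hB⟩ : rk M ∈ S :=
    Nat.sSup_mem ⟨0, ∅, empty_subset _, rfl, linearIndependent_empty_type⟩ hbdd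
  refine ⟨B, hBM, hBcard, hB, fun x hx => by_contra fun hxspan => ?_⟩
  have hxB : x ∉ B := fun h => hxspan (Submodule.subset_span h)
  have hins : LinearIndepOn (ZMod 2) id ((insert x B : Finset _) : Set (Fin n → ZMod 2)) := by
    rw [coe_insert]; exact LinearIndepOn.id_insert hB hxspan
  have hlarger : B.card + 1 ≤ rk M :=
    le_csSup hbdd ⟨insert x B, insert_subset hx hBM, card_insert_of_notMem hxB, hins⟩
  omega

theorem Finset.card_le_sum_choose_of_injOn {α β : Type*} {s : Finset α} {B : Finset β}
    {I : Finset ℕ} (f : α → Finset β) (hf : ∀ a ∈ s, f a ⊆ B ∧ (f a).card ∈ I)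
    (hinj : Set.InjOn f s) : s.card ≤ ∑ i ∈ I, B.card.choose i := by
  classical
  calc s.card ≤ (I.biUnion fun i => B.powersetCard i).card :=
        card_le_card_of_injOn f (fun a ha => mem_biUnion.2
          ⟨_, (hf a ha).2, mem_powersetCard.2 ⟨(hf a ha).1, rfl⟩⟩) hinj
    _ ≤ ∑ i ∈ I, (B.powersetCard i).card := card_biUnion_le
    _ = ∑ i ∈ I, B.card.choose i := by simp only [card_powersetCard]

/-- If `M` contains no circuit of size larger than `c`, then
`|M| ≤ ∑_{i=1}^{c-1} C(rank M, i)`. -/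
theorem card_le_of_no_large_circuit {n : ℕ} (M : Finset (Fin n → ZMod 2))
    (hM : (0 : Fin n → ZMod 2) ∉ M) (c : ℕ) (hc : 2 ≤ c)
    (hno : ∀ C ⊆ M, IsCircuit C → C.card ≤ c) :
    M.card ≤ ∑ i ∈ Finset.Icc 1 (c - 1), (rk M).choose i := by
  obtain ⟨B, hBM, hBcard, hB, hspan⟩ := exists_linearIndepOn_card_eq_rk M
  choose! T hTB hTsum using fun x hx => Submodule.exists_subset_sum_eq_of_mem_span (hspan x hx)
  have hx0 : ∀ x ∈ M, x ≠ 0 := fun x hx h => hM (h ▸ hx)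
  have hTcard : ∀ x ∈ M, (T x).card ∈ Icc 1 (c - 1) := by
    intro x hx
    refine mem_Icc.2 ⟨card_pos.2 (nonempty_iff_ne_empty.2 fun h => hx0 x hx ?_), ?_⟩
    · rw [← hTsum x hx, h, sum_empty]
    by_cases hxT : x ∈ T x
    · rw [hB.finset_eq_singleton_of_sum_eq (hTB x hx) hxT (hTsum x hx), card_singleton]
      omega
    · have hcirc := hB.isCircuit_insert (hTB x hx) hxT (hx0 x hx) (hTsum x hx)
      have := hno _ (insert_subset hx ((hTB x hx).trans hBM)) hcirc
      rw [card_insert_of_notMem hxT] at this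
      omega
  rw [← hBcard]
  exact card_le_sum_choose_of_injOn T (fun x hx => ⟨hTB x hx, hTcard x hx⟩)
    fun x hx y hy h => by rw [← hTsum x hx, ← hTsum y hy, h]
end

section
/- Let r be a positive integer and α ∈ [0, 1/2]. Then ∑_{i=0}^{⌊αr⌋} binom(r, i) ≤ 2^{H(α)·r}, where H(α) = -α·log₂(α) - (1-α)·log₂(1-α) is the binary entropy function (with H(0) = 0 by convention). -/
open Finset


/-- The binary entropy function (with `H 0 = 0` since `Real.logb 2 0 = 0`). -/
noncomputable def binEnt (a : ℝ) : ℝ := -(a * Real.logb 2 a) - (1 - a) * Real.logb 2 (1 - a)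

/-- Entropy bound for sums of binomial coefficients. -/
theorem sum_choose_le_two_rpow_entropy (r : ℕ) (hr : 1 ≤ r) (α : ℝ)
    (h0 : 0 ≤ α) (h1 : α ≤ 1 / 2) :
    (∑ i ∈ Finset.range (⌊α * r⌋₊ + 1), (r.choose i : ℝ)) ≤
      (2 : ℝ) ^ (binEnt α * r) := by
  rcases eq_or_lt_of_le h0 with rfl | hpos
  · simp [binEnt, Real.logb]
  -- now 0 < α
  have hrpos : (0:ℝ) < r := by exact_mod_cast hr
  have hq : (0:ℝ) < 1 - α := by linarith
  have hq1 : 1 - α ≤ 1 := by linarith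
  have hα1 : α ≤ 1 := by linarith
  set k := ⌊α * r⌋₊ with hk
  have hkle : (k:ℝ) ≤ α * r := Nat.floor_le (by positivity)
  have hkr : k ≤ r := by
    have : (k:ℝ) ≤ (r:ℝ) := le_trans hkle (by nlinarith)
    exact_mod_cast this
  set A : ℝ := α ^ (α * r) * (1 - α) ^ ((1 - α) * r) with hA
  have hApos : 0 < A := by positivity
  -- step: A ≤ α^i * (1-α)^(r-i) for i ≤ k
  have hterm : ∀ i ∈ Finset.range (k + 1), A ≤ α ^ i * (1 - α) ^ (r - i) := by
    intro i hi
    have hik : i ≤ k := Nat.lt_succ_iff.mp (Finset.mem_range.mp hi)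
    have hir : i ≤ r := le_trans hik hkr
    have hiα : (i:ℝ) ≤ α * r := le_trans (by exact_mod_cast hik) hkle
    have hratio : α / (1 - α) ≤ 1 := by
      rw [div_le_one hq]; linarith
    have hratio0 : 0 < α / (1 - α) := by positivity
    have hmono : (α / (1 - α)) ^ (α * r) ≤ (α / (1 - α)) ^ (i:ℝ) :=
      Real.rpow_le_rpow_of_exponent_ge hratio0 hratio hiα
    have hdiv : ∀ x : ℝ, (α / (1 - α)) ^ x = α ^ x / (1 - α) ^ x := fun x =>
      Real.div_rpow h0 hq.le x
    have key : (1 - α) ^ (r:ℝ) * (α / (1 - α)) ^ (α * r) ≤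
        (1 - α) ^ (r:ℝ) * (α / (1 - α)) ^ (i:ℝ) := by
      apply mul_le_mul_of_nonneg_left hmono (by positivity)
    have e1 : (1 - α) ^ (r:ℝ) * (α / (1 - α)) ^ (α * r) = A := by
      rw [hdiv, hA, show ((1:ℝ) - α) * r = (r:ℝ) - α * r by ring,
        mul_div_assoc', mul_comm ((1-α) ^ (r:ℝ)), mul_div_assoc, ← Real.rpow_sub hq]
    have e2 : (1 - α) ^ (r:ℝ) * (α / (1 - α)) ^ (i:ℝ) = α ^ i * (1 - α) ^ (r - i) := by
      rw [hdiv]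
      rw [← Real.rpow_natCast α i, ← Real.rpow_natCast (1-α) (r - i)]
      push_cast [hir]
      rw [mul_div_assoc', mul_comm, mul_div_assoc, ← Real.rpow_sub hq]
    rw [e1] at key
    rw [e2] at key
    exact key
  -- step: sum of full binomial terms = 1
  have hsum1 : ∑ i ∈ Finset.range (r + 1), (r.choose i : ℝ) * (α ^ i * (1 - α) ^ (r - i)) = 1 := by
    have h := add_pow α (1 - α) r
    simp only [add_sub_cancel, one_pow] at h
    calc ∑ i ∈ Finset.range (r + 1), (r.choose i : ℝ) * (α ^ i * (1 - α) ^ (r - i))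
        = ∑ i ∈ Finset.range (r + 1), α ^ i * (1 - α) ^ (r - i) * (r.choose i : ℝ) := by
          apply Finset.sum_congr rfl; intros; ring
      _ = 1 := h.symm
  have hsumle : ∑ i ∈ Finset.range (k + 1), (r.choose i : ℝ) * (α ^ i * (1 - α) ^ (r - i)) ≤ 1 := by
    calc ∑ i ∈ Finset.range (k + 1), (r.choose i : ℝ) * (α ^ i * (1 - α) ^ (r - i))
        ≤ ∑ i ∈ Finset.range (r + 1), (r.choose i : ℝ) * (α ^ i * (1 - α) ^ (r - i)) := by
          apply Finset.sum_le_sum_of_subset_of_nonneg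
          · exact Finset.range_subset_range.mpr (by omega)
          · intro i _ _; positivity
      _ = 1 := hsum1
  -- A * sum ≤ 1
  have hAsum : A * ∑ i ∈ Finset.range (k + 1), (r.choose i : ℝ) ≤ 1 := by
    calc A * ∑ i ∈ Finset.range (k + 1), (r.choose i : ℝ)
        = ∑ i ∈ Finset.range (k + 1), (r.choose i : ℝ) * A := by
          rw [Finset.mul_sum]; apply Finset.sum_congr rfl; intros; ring
      _ ≤ ∑ i ∈ Finset.range (k + 1), (r.choose i : ℝ) * (α ^ i * (1 - α) ^ (r - i)) := by
          apply Finset.sum_le_sum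
          intro i hi
          exact mul_le_mul_of_nonneg_left (hterm i hi) (by positivity)
      _ ≤ 1 := hsumle
  -- 2 ^ (binEnt α * r) = A⁻¹
  have hpow : (2:ℝ) ^ (binEnt α * r) = A⁻¹ := by
    have h2 : (2:ℝ) ^ (Real.logb 2 α) = α := Real.rpow_logb two_pos (by norm_num) hpos
    have h2' : (2:ℝ) ^ (Real.logb 2 (1 - α)) = 1 - α := Real.rpow_logb two_pos (by norm_num) hq
    have : binEnt α * r = Real.logb 2 α * (-(α * r)) + Real.logb 2 (1 - α) * (-((1 - α) * r)) := by
      simp [binEnt]; ring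
    rw [this, Real.rpow_add two_pos, Real.rpow_mul (by norm_num : (0:ℝ) ≤ 2),
      Real.rpow_mul (by norm_num : (0:ℝ) ≤ 2), h2, h2',
      Real.rpow_neg h0, Real.rpow_neg hq.le, hA, mul_inv]
  rw [hpow, ← one_div, le_div_iff₀ hApos, mul_comm]
  exact hAsum
end

section
/- Let M ⊆ 𝔽₂ⁿ \ {0} be Eulerian and suppose C₁, ..., C_t are circuits in 𝔽₂ⁿ \ {0} whose iterated symmetric difference equals M (a circuit odd-cover). Then for every subset N ⊆ M, we have t · (rank(N) + 1) ≥ |N|. In particular c₂(M) ≥ max_{N⊆M} ⌈|N|/(rank(N)+1)⌉, where c₂(M) is the minimum number of circuits in a circuit odd-cover of M. -/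
open Finset

/-- `C 0 ⊕ ⋯ ⊕ C (t-1) = M`: each element of `M` is covered an odd number of
times and each element outside `M` an even number of times, and all `C i` are circuits. -/
def IsOddCover {V : Type*} [AddCommGroup V] [DecidableEq V]
    (M : Finset V) {t : ℕ} (C : Fin t → Finset V) : Prop :=
  (∀ i, IsCircuit (C i)) ∧
  ∀ x : V, x ∈ M ↔ Odd ((Finset.univ.filter fun i => x ∈ C i).card)

/-- minimum number of circuits in a circuit odd-cover of `M`. -/
noncomputable def oddCoverNum {V : Type*} [AddCommGroup V] [DecidableEq V]
    (M : Finset V) : ℕ :=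
  sInf {t : ℕ | ∃ C : Fin t → Finset V, IsOddCover M C}

lemma rk_ge {n : ℕ} (N : Finset (Fin n → ZMod 2)) (s : Finset (Fin n → ZMod 2))
    (hs : s ⊆ N)
    (hli : LinearIndependent (ZMod 2) (fun x : s => (x : Fin n → ZMod 2))) :
    s.card ≤ rk N := by
  apply le_csSup
  · refine ⟨N.card, ?_⟩
    rintro k ⟨u, hu, rfl, -⟩
    exact Finset.card_le_card hu
  · exact ⟨s, hs, rfl, hli⟩

lemma circuit_proper_indep {n : ℕ} {C D : Finset (Fin n → ZMod 2)}
    (hC : IsCircuit C) (hD : D ⊆ C) (hne : D ≠ C) :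
    LinearIndependent (ZMod 2) (fun x : D => (x : Fin n → ZMod 2)) := by
  rw [linearIndependent_iff']
  intro s g hsum i hi
  by_contra hgi
  have hg1 : ∀ j : D, g j = 0 ∨ g j = 1 := fun j => by
    have h01 : ∀ a : ZMod 2, a = 0 ∨ a = 1 := by decide
    exact h01 _
  set E : Finset (Fin n → ZMod 2) := (s.filter (fun j => g j = 1)).image Subtype.val with hE
  have hEsum : ∑ x ∈ E, x = 0 := by
    rw [hE, Finset.sum_image (by intro a _ b _ h; exact Subtype.ext h)]
    rw [← hsum, Finset.sum_filter]
    apply Finset.sum_congr rfl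
    intro j _
    rcases hg1 j with h | h <;> simp [h]
  have hED : E ⊆ D := by
    intro x hx
    simp only [hE, Finset.mem_image] at hx
    obtain ⟨j, -, rfl⟩ := hx
    exact j.2
  have hEne : E.Nonempty := by
    refine ⟨i, ?_⟩
    simp only [hE, Finset.mem_image]
    refine ⟨i, Finset.mem_filter.mpr ⟨hi, ?_⟩, rfl⟩
    rcases hg1 i with h | h
    · exact absurd h hgi
    · exact h
  have hEC := hC.2.2.2 E (hED.trans hD) hEne hEsum
  exact hne (Finset.Subset.antisymm hD (hEC ▸ hED))

lemma cover_bound {n : ℕ} (M : Finset (Fin n → ZMod 2)) (t : ℕ)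
    (C : Fin t → Finset (Fin n → ZMod 2)) (hC : IsOddCover M C)
    (N : Finset (Fin n → ZMod 2)) (hN : N ⊆ M) : N.card ≤ t * (rk N + 1) := by
  have key : ∀ i, (N ∩ C i).card ≤ rk N + 1 := by
    intro i
    set D := N ∩ C i with hDdef
    have hDC : D ⊆ C i := Finset.inter_subset_right
    have hDN : D ⊆ N := Finset.inter_subset_left
    by_cases h : D = C i
    · obtain ⟨a, ha⟩ := (hC.1 i).1
      have haD : a ∈ D := h ▸ ha
      have herase : D.erase a ≠ C i := by
        intro hcontra
        have : a ∈ D.erase a := hcontra ▸ ha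
        exact (Finset.notMem_erase a D) this
      have hli := circuit_proper_indep (hC.1 i) ((Finset.erase_subset a D).trans hDC) herase
      have h1 : (D.erase a).card ≤ rk N :=
        rk_ge N _ ((Finset.erase_subset a D).trans hDN) hli
      have h2 : (D.erase a).card + 1 = D.card := Finset.card_erase_add_one haD
      omega
    · have hli := circuit_proper_indep (hC.1 i) hDC h
      have := rk_ge N D hDN hli
      omega
  have hsub : N ⊆ Finset.univ.biUnion (fun i => N ∩ C i) := by
    intro x hx
    have hodd := (hC.2 x).mp (hN hx)
    have hpos : (Finset.univ.filter fun i => x ∈ C i).Nonempty := by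
      rw [← Finset.card_pos]
      rcases hodd with ⟨k, hk⟩; omega
    obtain ⟨i, hi⟩ := hpos
    simp only [Finset.mem_filter, Finset.mem_univ, true_and] at hi
    simp only [Finset.mem_biUnion, Finset.mem_univ, true_and, Finset.mem_inter]
    exact ⟨i, hx, hi⟩
  calc N.card ≤ (Finset.univ.biUnion (fun i => N ∩ C i)).card := Finset.card_le_card hsub
    _ ≤ ∑ i, (N ∩ C i).card := Finset.card_biUnion_le
    _ ≤ ∑ _i : Fin t, (rk N + 1) := Finset.sum_le_sum (fun i _ => key i)
    _ = t * (rk N + 1) := by simp [Finset.sum_const, Finset.card_univ, mul_comm]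

/-- Any circuit odd-cover of `M` with `t` circuits satisfies
`|N| ≤ t (rank N + 1)` for all `N ⊆ M`; in particular
`⌈|N|/(rank N + 1)⌉ ≤ c₂(M)` for all `N ⊆ M`. -/
theorem oddCover_density_lower_bound {n : ℕ} (M : Finset (Fin n → ZMod 2))
    (hM : (0 : Fin n → ZMod 2) ∉ M) (heul : ∑ x ∈ M, x = 0)
    (t : ℕ) (C : Fin t → Finset (Fin n → ZMod 2)) (hC : IsOddCover M C) :
    (∀ N ⊆ M, N.card ≤ t * (rk N + 1)) ∧
    (∀ N ⊆ M, N.card ≤ oddCoverNum M * (rk N + 1)) := by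
  constructor
  · exact fun N hN => cover_bound M t C hC N hN
  · have hne : {t' : ℕ | ∃ C' : Fin t' → Finset (Fin n → ZMod 2), IsOddCover M C'}.Nonempty :=
      ⟨t, C, hC⟩
    have hmem := Nat.sInf_mem hne
    obtain ⟨C', hC'⟩ := hmem
    exact fun N hN => cover_bound M _ C' hC' N hN
end

section
/- Let M ⊆ 𝔽₂ⁿ \ {0} be a finite Eulerian set that can be partitioned into t linearly independent subsets. Then M has a circuit odd-cover using at most (4/3)·t circuits; i.e., c₂(M) ≤ (4/3)·a(M), where a(M) is the minimum number of linearly independent sets needed to partition M. -/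
open Finset

/-! A linearly independent part `I` with at least two elements becomes a circuit once its sum
`∑ I` (which is nonzero and lies outside `I`) is added. Taking the symmetric difference of `M`
with these circuits leaves an Eulerian set with at most one element per part, so of size at most
`t`; it splits into disjoint circuits of size at least three. Altogether at most `t + t / 3`
circuits are used.

Symmetric differences are computed as sums of characteristic vectors in `V →₀ ZMod 2`. -/

theorem Finsupp.card_support_finsetSum_le {ι α M : Type*} [DecidableEq α] [AddCommMonoid M]
    (s : Finset ι) (f : ι → α →₀ M) :
    #(∑ i ∈ s, f i).support ≤ ∑ i ∈ s, #(f i).support :=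
  (card_le_card Finsupp.support_finsetSum).trans card_biUnion_le

section CharVec

variable {α : Type*}

noncomputable def charVec (S : Finset α) : α →₀ ZMod 2 :=
  ∑ x ∈ S, Finsupp.single x 1

variable [DecidableEq α]

theorem charVec_apply (S : Finset α) (x : α) : charVec S x = if x ∈ S then 1 else 0 := by
  simp [charVec, Finsupp.finsetSum_apply, Finsupp.single_apply]

@[simp]
theorem support_charVec (S : Finset α) : (charVec S).support = S := by
  ext x
  simp [charVec_apply]

theorem charVec_support (f : α →₀ ZMod 2) : charVec f.support = f := by
  ext x
  rw [charVec_apply]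
  split_ifs with hx
  · exact (Fin.eq_one_of_ne_zero _ (Finsupp.mem_support_iff.1 hx)).symm
  · exact (Finsupp.notMem_support_iff.1 hx).symm

theorem charVec_insert {a : α} {S : Finset α} (ha : a ∉ S) :
    charVec (insert a S) = Finsupp.single a 1 + charVec S :=
  sum_insert ha

theorem charVec_biUnion {ι : Type*} {s : Finset ι} {t : ι → Finset α}
    (h : (s : Set ι).PairwiseDisjoint t) : charVec (s.biUnion t) = ∑ i ∈ s, charVec (t i) :=
  sum_biUnion h

theorem sum_charVec_parts {S : Finset α} (P : Finpartition S) :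
    ∑ C ∈ P.parts, charVec C = charVec S := by
  have h := charVec_biUnion P.disjoint
  rw [P.biUnion_parts] at h
  exact h.symm

theorem linearCombination_charVec {V : Type*} [AddCommGroup V] [Module (ZMod 2) V]
    (S : Finset V) : Finsupp.linearCombination (ZMod 2) id (charVec S) = ∑ x ∈ S, x := by
  simp [charVec, map_sum]

end CharVec

section Circuits

variable {V : Type*} [AddCommGroup V] [DecidableEq V]

theorem oddCoverNum_le_card {M : Finset V} {ι : Type*} [Fintype ι] (C : ι → Finset V)
    (hC : ∀ i, IsCircuit (C i)) (hsum : ∑ i, charVec (C i) = charVec M) :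
    oddCoverNum M ≤ Fintype.card ι := by
  let e := (Fintype.equivFin ι).symm
  refine Nat.sInf_le ⟨C ∘ e, fun j => hC (e j), fun x => ?_⟩
  have hx : ((#{j | x ∈ (C ∘ e) j} : ℕ) : ZMod 2) = charVec M x := by
    rw [← hsum, Finsupp.finsetSum_apply, ← e.sum_comp, natCast_card_filter]
    simp only [charVec_apply, Function.comp_apply]
  rw [← ZMod.natCast_eq_one_iff_odd, hx, charVec_apply]
  split_ifs with hxM <;> simp [hxM]

theorem exists_isCircuit_subset {T : Finset V} (hT : T.Nonempty) (h0 : (0 : V) ∉ T)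
    (hsum : ∑ x ∈ T, x = 0) : ∃ C ⊆ T, IsCircuit C := by
  obtain ⟨C, hCT, ⟨hC, hCsum⟩, hmin⟩ := exists_minimal_le_of_wellFoundedLT
    (fun D : Finset V => D.Nonempty ∧ ∑ x ∈ D, x = 0) T ⟨hT, hsum⟩
  exact ⟨C, hCT, hC, fun h => h0 (hCT h), hCsum,
    fun D hDC hD hDsum => hDC.antisymm (hmin ⟨hD, hDsum⟩ hDC)⟩

theorem exists_finpartition_isCircuit {T : Finset V} (h0 : (0 : V) ∉ T)
    (hsum : ∑ x ∈ T, x = 0) : ∃ P : Finpartition T, ∀ C ∈ P.parts, IsCircuit C := by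
  induction T using Finset.strongInduction with
  | H T ih =>
  obtain rfl | hT := T.eq_empty_or_nonempty
  · exact ⟨Finpartition.empty _, by simp⟩
  obtain ⟨C, hCT, hC⟩ := exists_isCircuit_subset hT h0 hsum
  have hrest : ∑ x ∈ T \ C, x = 0 := by rw [sum_sdiff_eq_sub hCT, hsum, hC.2.2.1, sub_zero]
  obtain ⟨P, hP⟩ := ih (T \ C) (sdiff_ssubset hCT hC.1) (fun h => h0 (mem_sdiff.1 h).1) hrest
  refine ⟨P.extend hC.1.ne_empty disjoint_sdiff_self_left (sdiff_union_of_subset hCT), ?_⟩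
  simp only [Finpartition.extend_parts, mem_insert, forall_eq_or_imp]
  exact ⟨hC, hP⟩

variable [Module (ZMod 2) V]

theorem IsCircuit.three_le_card {C : Finset V} (hC : IsCircuit C) : 3 ≤ #C := by
  obtain ⟨hne, h0, hsum, -⟩ := hC
  by_contra! hlt
  interval_cases h : #C
  · exact hne.ne_empty (card_eq_zero.1 h)
  · obtain ⟨x, rfl⟩ := card_eq_one.1 h
    simp_all
  · obtain ⟨x, y, hxy, rfl⟩ := card_eq_two.1 h
    rw [sum_pair hxy] at hsum
    exact hxy ((eq_neg_of_add_eq_zero_left hsum).trans (ZModModule.neg_eq_self y))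

theorem LinearIndepOn.injOn_finsetSum {I : Finset V}
    (hI : LinearIndepOn (ZMod 2) id (I : Set V)) :
    Set.InjOn (fun S : Finset V => ∑ x ∈ S, x) {S | S ⊆ I} := by
  intro S hS S' hS' h
  rw [← support_charVec S, ← support_charVec S']
  congr 1
  refine linearIndepOn_iffₛ.1 hI _ ?_ _ ?_ ?_
  · rw [Finsupp.mem_supported, support_charVec]
    exact_mod_cast hS
  · rw [Finsupp.mem_supported, support_charVec]
    exact_mod_cast hS'
  · simpa [linearCombination_charVec] using h

theorem LinearIndepOn.sum_notMem {I : Finset V} (hI : LinearIndepOn (ZMod 2) id (I : Set V))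
    (hcard : 2 ≤ #I) : ∑ x ∈ I, x ∉ I := by
  intro hmem
  have : {∑ x ∈ I, x} = I :=
    hI.injOn_finsetSum (singleton_subset_iff.2 hmem) (Subset.refl I) (sum_singleton _ _)
  rw [← this, card_singleton] at hcard
  omega

theorem LinearIndepOn.isCircuit_insert_sum {I : Finset V}
    (hI : LinearIndepOn (ZMod 2) id (I : Set V)) (hcard : 2 ≤ #I) :
    IsCircuit (insert (∑ x ∈ I, x) I) := by
  set σ := ∑ x ∈ I, x
  have hσI : σ ∉ I := hI.sum_notMem hcard
  have hinj := hI.injOn_finsetSum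
  refine ⟨insert_nonempty _ _, ?_, ?_, fun D hD hDne hDsum => ?_⟩
  · rw [mem_insert, not_or]
    refine ⟨fun h => ?_, fun h => hI.ne_zero h rfl⟩
    have : I = ∅ := hinj (Subset.refl I) (empty_subset I) (h.symm.trans sum_empty.symm)
    simp [this] at hcard
  · rw [sum_insert hσI]
    exact ZModModule.add_self σ
  by_cases hσD : σ ∈ D
  · have hsub : D.erase σ ⊆ I := fun x hx =>
      (mem_insert.1 (hD (mem_of_mem_erase hx))).resolve_left (ne_of_mem_erase hx)
    have hsum : ∑ x ∈ D.erase σ, x = σ := by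
      rw [← add_sum_erase D (fun x => x) hσD] at hDsum
      exact (eq_neg_of_add_eq_zero_right hDsum).trans (ZModModule.neg_eq_self σ)
    rw [← insert_erase hσD, hinj hsub (Subset.refl I) hsum]
  · have hsub : D ⊆ I := fun x hx =>
      (mem_insert.1 (hD hx)).resolve_left fun h => hσD (h ▸ hx)
    exact absurd (hinj hsub (empty_subset I) (hDsum.trans sum_empty.symm)) hDne.ne_empty

theorem LinearIndepOn.card_support_sub_le_one {I : Finset V}
    (hI : LinearIndepOn (ZMod 2) id (I : Set V)) :
    #(charVec I - if 2 ≤ #I then charVec (insert (∑ x ∈ I, x) I) else 0).support ≤ 1 := by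
  split_ifs with hcard
  · rw [charVec_insert (hI.sum_notMem hcard), sub_add_cancel_right, Finsupp.support_neg]
    exact (card_le_card Finsupp.support_single_subset).trans (card_singleton _).le
  · rw [sub_zero, support_charVec]
    omega

theorem three_mul_oddCoverNum_le {M : Finset V} (h0 : (0 : V) ∉ M) (hM : ∑ x ∈ M, x = 0)
    {ι : Type*} (s : Finset ι) (D : ι → Finset V) (hD : ∀ i ∈ s, IsCircuit (D i)) :
    3 * oddCoverNum M ≤ 3 * #s + #(charVec M - ∑ i ∈ s, charVec (D i)).support := by
  set T := (charVec M - ∑ i ∈ s, charVec (D i)).support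
  have hT : charVec T = charVec M - ∑ i ∈ s, charVec (D i) := charVec_support _
  have hT0 : (0 : V) ∉ T := by
    rw [Finsupp.notMem_support_iff, Finsupp.sub_apply, Finsupp.finsetSum_apply,
      sum_eq_zero fun i hi => by rw [charVec_apply, if_neg (hD i hi).2.1], charVec_apply,
      if_neg h0, sub_zero]
  have hTsum : ∑ x ∈ T, x = 0 := by
    rw [← linearCombination_charVec, hT, map_sub, map_sum, linearCombination_charVec, hM]
    simp [linearCombination_charVec, sum_eq_zero fun i hi => (hD i hi).2.2.1]
  obtain ⟨P, hP⟩ := exists_finpartition_isCircuit hT0 hTsum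
  let C : s ⊕ P.parts → Finset V := Sum.elim (fun i => D i) Subtype.val
  have hC : ∀ j, IsCircuit (C j) := by
    rintro (i | K)
    exacts [hD i i.2, hP K K.2]
  have hCsum : ∑ j, charVec (C j) = charVec M := by
    rw [Fintype.sum_sum_type]
    simp only [C, Sum.elim_inl, Sum.elim_inr]
    rw [sum_coe_sort s (fun i => charVec (D i)), sum_coe_sort P.parts charVec,
      sum_charVec_parts, hT, add_sub_cancel]
  have hcover := oddCoverNum_le_card C hC hCsum
  rw [Fintype.card_sum, Fintype.card_coe, Fintype.card_coe] at hcover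
  have hparts : 3 * #P.parts ≤ #T := by
    rw [← P.sum_card_parts, mul_comm, ← smul_eq_mul, ← sum_const]
    exact sum_le_sum fun C hC => (hP C hC).three_le_card
  omega

end Circuits

/-- If `M` can be partitioned into `t` linearly independent sets, then `M` has a
circuit odd-cover with at most `(4/3) t` circuits; i.e. `3 c₂(M) ≤ 4 t`. -/
theorem oddCoverNum_le_four_thirds_arboricity {n : ℕ} (M : Finset (Fin n → ZMod 2))
    (hM : (0 : Fin n → ZMod 2) ∉ M) (heul : ∑ x ∈ M, x = 0)
    (t : ℕ) (I : Fin t → Finset (Fin n → ZMod 2))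
    (hdisj : ∀ i j, i ≠ j → Disjoint (I i) (I j))
    (hunion : Finset.univ.biUnion I = M)
    (hindep : ∀ i, LinearIndependent (ZMod 2)
      (fun x : (I i) => (x : Fin n → ZMod 2))) :
    3 * oddCoverNum M ≤ 4 * t := by
  have hI : ∀ i, LinearIndepOn (ZMod 2) id (I i : Set (Fin n → ZMod 2)) := hindep
  set D := fun i => insert (∑ x ∈ I i, x) (I i)
  set A : Finset (Fin t) := {i | 2 ≤ #(I i)}
  have hM' : charVec M = ∑ i, charVec (I i) := by
    rw [← hunion, charVec_biUnion]
    exact fun i _ j _ hij => hdisj i j hij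
  have hres : charVec M - ∑ i ∈ A, charVec (D i) =
      ∑ i, (charVec (I i) - if 2 ≤ #(I i) then charVec (D i) else 0) := by
    rw [hM', sum_filter, sum_sub_distrib]
  have hcard : #(charVec M - ∑ i ∈ A, charVec (D i)).support ≤ t := by
    rw [hres]
    refine (Finsupp.card_support_finsetSum_le _ _).trans
      ((sum_le_sum fun i _ => (hI i).card_support_sub_le_one).trans ?_)
    simp
  calc 3 * oddCoverNum M
      ≤ 3 * #A + t := (three_mul_oddCoverNum_le hM heul A D
        fun i hi => (hI i).isCircuit_insert_sum (mem_filter.1 hi).2).trans (by omega)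
    _ ≤ 3 * t + t := by grw [card_filter_le, card_univ, Fintype.card_fin]
    _ = 4 * t := by ring
end

section
/- Let p be an odd prime with 2 a primitive root modulo p. Let x ∈ 𝔽₂^p be nonzero with ∑_{i∈ℤ_p} x_i = 0, and let φ : 𝔽₂^p → 𝔽₂^p be the linear map φ = ∑_{i∈ℤ_p} x_i σ^i, where σ is the cyclic coordinate shift by one. Then the kernel of φ is the one-dimensional subspace spanned by the all-ones vector ∑_{i∈ℤ_p} e_i. -/
/-!
Write `σ = shiftMap p 1`, so that `φ = f(σ)` for `f = ∑ xᵢ Xⁱ ∈ 𝔽₂[X]`. Because `(X - 1) Φ_p = X ^ p - 1`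
and `σ ^ p = 1`, the range of `Φ_p(σ)` consists of `σ`-fixed, i.e. constant, vectors. As 2 has order
`p - 1` modulo `p`, `Φ_p` is irreducible over `𝔽₂`. It does not divide `f`: otherwise `x = φ(e₀)` would
be a nonzero constant vector, of odd weight `p`. So `f` and `Φ_p` are coprime, and a Bézout identity
`a f + b Φ_p = 1` gives `ker f(σ) ⊆ range Φ_p(σ)`, the constant vectors.
-/

open Finset


/-- The cyclic coordinate shift by `j` as a linear map on `𝔽₂^p`. -/
def shiftMap (p : ℕ) (j : ZMod p) :
    (ZMod p → ZMod 2) →ₗ[ZMod 2] (ZMod p → ZMod 2) where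
  toFun y := fun i => y (i - j)
  map_add' _ _ := rfl
  map_smul' _ _ := rfl

open Polynomial

theorem Polynomial.ker_aeval_le_range_aeval_of_isCoprime {R M : Type*} [CommRing R]
    [AddCommGroup M] [Module R M] (T : M →ₗ[R] M) {f g : R[X]} (hfg : IsCoprime f g) :
    LinearMap.ker (aeval T f) ≤ LinearMap.range (aeval T g) := by
  obtain ⟨a, b, hab⟩ := hfg
  intro v hv
  refine ⟨aeval T b v, ?_⟩
  have := congr_arg (fun q : R[X] => aeval T q v) hab
  rw [mul_comm b g] at this
  simpa [Module.End.mul_apply, LinearMap.mem_ker.1 hv] using this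

theorem Polynomial.irreducible_cyclotomic_zmod_of_orderOf_eq_totient {q n : ℕ} [Fact q.Prime]
    (hqn : ¬q ∣ n) (horder : orderOf (q : ZMod n) = n.totient) :
    Irreducible (cyclotomic n (ZMod q)) :=
  ZMod.irreducible_of_dvd_cyclotomic_of_natDegree hqn dvd_rfl <| by
    rw [natDegree_cyclotomic, ← horder, ← orderOf_units, ZMod.coe_unitOfCoprime]

section shiftMap

variable (p : ℕ)

theorem shiftMap_zero : shiftMap p 0 = 1 := by
  ext; simp [shiftMap]

theorem shiftMap_add (i j : ZMod p) : shiftMap p (i + j) = shiftMap p i * shiftMap p j := by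
  ext y k
  show y (k - (i + j)) = y (k - i - j)
  rw [sub_sub]

theorem shiftMap_natCast (n : ℕ) : shiftMap p n = shiftMap p 1 ^ n := by
  induction n with
  | zero => simp [shiftMap_zero]
  | succ n ih => rw [Nat.cast_succ, shiftMap_add, ih, pow_succ]

theorem shiftMap_one_pow_self : shiftMap p 1 ^ p = 1 := by
  rw [← shiftMap_natCast, ZMod.natCast_self, shiftMap_zero]

variable [NeZero p]

theorem shiftMap_eq_pow_val (i : ZMod p) : shiftMap p i = shiftMap p 1 ^ i.val := by
  rw [← shiftMap_natCast, ZMod.natCast_zmod_val]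

theorem sum_smul_shiftMap_eq_aeval (x : ZMod p → ZMod 2) :
    ∑ i, x i • shiftMap p i = aeval (shiftMap p 1) (∑ i, C (x i) * X ^ i.val) := by
  rw [map_sum]
  refine sum_congr rfl fun i _ => ?_
  rw [map_mul, aeval_C, map_pow, aeval_X, ← shiftMap_eq_pow_val, Algebra.smul_def]

theorem sum_smul_shiftMap_apply_single_zero (x : ZMod p → ZMod 2) :
    (∑ i, x i • shiftMap p i) (Pi.single 0 1) = x := by
  ext j
  simp [shiftMap, Pi.single_apply, sub_eq_zero]

theorem mem_span_allOnes_of_shiftMap_one_apply_eq {y : ZMod p → ZMod 2}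
    (hy : shiftMap p 1 y = y) : y ∈ Submodule.span (ZMod 2) {fun _ => 1} := by
  have hconst : ∀ n : ℕ, y n = y 0 := by
    intro n
    induction n with
    | zero => simp
    | succ n ih =>
      calc y ((n + 1 : ℕ) : ZMod p) = shiftMap p 1 y ((n + 1 : ℕ) : ZMod p) := by rw [hy]
        _ = y 0 := by simpa [shiftMap] using ih
  refine Submodule.mem_span_singleton.2 ⟨y 0, funext fun i => ?_⟩
  simpa [ZMod.natCast_zmod_val] using (hconst i.val).symm

theorem range_aeval_cyclotomic_shiftMap_le_span_allOnes [Fact p.Prime] :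
    LinearMap.range (aeval (shiftMap p 1) (cyclotomic p (ZMod 2))) ≤
      Submodule.span (ZMod 2) {fun _ => 1} := by
  rintro _ ⟨z, rfl⟩
  apply mem_span_allOnes_of_shiftMap_one_apply_eq
  have := congr_arg (fun q => aeval (shiftMap p 1) q z)
    ((mul_comm _ _).trans (cyclotomic_prime_mul_X_sub_one (ZMod 2) p))
  simp only [map_mul, map_sub, map_pow, aeval_X, map_one, shiftMap_one_pow_self, sub_self] at this
  simpa [sub_eq_zero, Module.End.mul_apply] using this

end shiftMap

/-- If `2` is a primitive root mod the odd prime `p` and `x ≠ 0` has even weight,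
then the kernel of `φ = ∑ i, x i • σ^i` is spanned by the all-ones vector. -/
theorem ker_shift_poly_eq_span_allOnes (p : ℕ) [Fact p.Prime] (hodd : Odd p)
    (horder : orderOf (2 : ZMod p) = p - 1)
    (x : ZMod p → ZMod 2) (hx0 : x ≠ 0) (hxsum : ∑ i, x i = 0) :
    LinearMap.ker (∑ i : ZMod p, x i • shiftMap p i) =
      Submodule.span (ZMod 2) {(fun _ => 1 : ZMod p → ZMod 2)} := by
  have hirr : Irreducible (cyclotomic p (ZMod 2)) :=
    irreducible_cyclotomic_zmod_of_orderOf_eq_totient hodd.not_two_dvd_nat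
      (by rw [Nat.totient_prime Fact.out]; exact_mod_cast horder)
  have hndvd : ¬cyclotomic p (ZMod 2) ∣ ∑ i, C (x i) * X ^ i.val := by
    rintro ⟨g, hg⟩
    obtain ⟨c, hc⟩ := Submodule.mem_span_singleton.1 <|
      range_aeval_cyclotomic_shiftMap_le_span_allOnes p ⟨aeval (shiftMap p 1) g (Pi.single 0 1),
        by rw [← Module.End.mul_apply, ← map_mul, ← hg, ← sum_smul_shiftMap_eq_aeval,
          sum_smul_shiftMap_apply_single_zero]⟩
    have hc0 : c = 0 := by
      simpa [← hc, ZMod.card, hodd.natCast_zmod_two] using hxsum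
    exact hx0 (by rw [← hc, hc0, zero_smul])
  refine le_antisymm ?_ ?_
  · rw [sum_smul_shiftMap_eq_aeval]
    exact (ker_aeval_le_range_aeval_of_isCoprime _ (hirr.coprime_iff_not_dvd.2 hndvd).symm).trans
      (range_aeval_cyclotomic_shiftMap_le_span_allOnes p)
  · rw [Submodule.span_singleton_le_iff_mem, LinearMap.mem_ker]
    ext j
    simp [shiftMap, hxsum]
end

section
/- Let p be an odd prime for which 2 has multiplicative order p−1 modulo p. Then the set N = {x ∈ 𝔽₂^p \ {0} : ∑_{i∈ℤ_p} x_i = 0} can be partitioned into (2^{p-1} − 1)/p circuits, each of size exactly p. Consequently, the complete binary matroid M = 𝔽₂^{p-1} \ {0} satisfies c(M) = (2^{p-1} − 1)/p. -/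
open Finset

/-- `𝒞` is a partition of `M` into pairwise disjoint circuits. -/
def IsCircuitPartition {V : Type*} [AddCommGroup V] [DecidableEq V]
    (M : Finset V) (𝒞 : Finset (Finset V)) : Prop :=
  (∀ C ∈ 𝒞, IsCircuit C) ∧
  (∀ C ∈ 𝒞, ∀ D ∈ 𝒞, C ≠ D → Disjoint C D) ∧
  𝒞.biUnion id = M
/-- minimum number of pairwise disjoint circuits partitioning `M`. -/
noncomputable def circuitDecompNum {V : Type*} [AddCommGroup V] [DecidableEq V]
    (M : Finset V) : ℕ :=
  sInf {t : ℕ | ∃ 𝒞 : Finset (Finset V), IsCircuitPartition M 𝒞 ∧ 𝒞.card = t}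

open Polynomial

section Aux
variable (p : ℕ) [Fact p.Prime]

private noncomputable abbrev Phi : (ZMod 2)[X] := Polynomial.cyclotomic p (ZMod 2)

private noncomputable def qpoly (x : ZMod p → ZMod 2) : (ZMod 2)[X] :=
  ∑ i : ZMod p, Polynomial.C (x i) * Polynomial.X ^ i.val

lemma zmod2_add_self (a : ZMod 2) : a + a = 0 := by revert a; decide

lemma zmod2_eq_one (a : ZMod 2) (h : a ≠ 0) : a = 1 := by revert a; decide

lemma qpoly_coeff (x : ZMod p → ZMod 2) (m : ℕ) (hm : m < p) :
    (qpoly p x).coeff m = x (m : ZMod p) := by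
  rw [qpoly, Polynomial.finset_sum_coeff]
  rw [Finset.sum_eq_single ((m : ZMod p) : ZMod p)]
  · simp [Polynomial.coeff_C_mul, Polynomial.coeff_X_pow, ZMod.val_cast_of_lt hm]
  · intro i _ hne
    simp only [Polynomial.coeff_C_mul, Polynomial.coeff_X_pow]
    rw [if_neg, mul_zero]
    intro h
    exact hne (by rw [← ZMod.natCast_rightInverse i, ← h])
  · intro h; exact absurd (mem_univ _) h

lemma qpoly_add (x y : ZMod p → ZMod 2) : qpoly p (x + y) = qpoly p x + qpoly p y := by
  rw [qpoly, qpoly, qpoly, ← Finset.sum_add_distrib]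
  refine Finset.sum_congr rfl fun i _ => ?_
  rw [Pi.add_apply, Polynomial.C_add, add_mul]

lemma qpoly_natDegree_le (x : ZMod p → ZMod 2) : (qpoly p x).natDegree ≤ p - 1 := by
  refine Polynomial.natDegree_sum_le_of_forall_le _ _ fun i _ => ?_
  refine le_trans (Polynomial.natDegree_C_mul_le _ _) ?_
  refine le_trans (Polynomial.natDegree_X_pow_le _) ?_
  have := ZMod.val_lt i
  omega

lemma phi_coeff (m : ℕ) (hm : m < p) : (Phi p).coeff m = 1 := by
  rw [Phi, Polynomial.cyclotomic_prime, Polynomial.finset_sum_coeff]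
  rw [Finset.sum_eq_single m]
  · simp [Polynomial.coeff_X_pow]
  · intro i _ hne; simp [Polynomial.coeff_X_pow, Ne.symm hne]
  · intro h; exact absurd (Finset.mem_range.2 hm) h

lemma phi_natDegree : (Phi p).natDegree = p - 1 := by
  rw [Phi, Polynomial.natDegree_cyclotomic, Nat.totient_prime Fact.out]

lemma phi_monic : (Phi p).Monic := Polynomial.cyclotomic.monic p (ZMod 2)

lemma phi_ne_zero : (Phi p) ≠ 0 := (phi_monic p).ne_zero

/-- if `Φ ∣ q x` then `x = 0` or `x = 1` (the all-ones vector). -/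
lemma qpoly_dvd (x : ZMod p → ZMod 2) (h : Phi p ∣ qpoly p x) :
    x = 0 ∨ x = fun _ => (1 : ZMod 2) := by
  by_cases h0 : qpoly p x = 0
  · left
    funext i
    have h1 := qpoly_coeff p x i.val (ZMod.val_lt i)
    rw [h0, ZMod.natCast_rightInverse i, Polynomial.coeff_zero] at h1
    exact h1.symm
  · right
    obtain ⟨c, hc⟩ := h
    have hcne : c ≠ 0 := by rintro rfl; rw [mul_zero] at hc; exact h0 hc
    have hdeg : (qpoly p x).natDegree = (Phi p).natDegree + c.natDegree := by
      rw [hc, Polynomial.natDegree_mul (phi_ne_zero p) hcne]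
    have hd0 : c.natDegree = 0 := by
      have := qpoly_natDegree_le p x
      have := phi_natDegree p
      omega
    have hcC := Polynomial.eq_C_of_natDegree_eq_zero hd0
    have hc0 : c.coeff 0 ≠ 0 := by
      intro h'; rw [h', Polynomial.C_0] at hcC; exact hcne hcC
    rw [zmod2_eq_one _ hc0, Polynomial.C_1] at hcC
    rw [hcC, mul_one] at hc
    funext i
    have h1 := qpoly_coeff p x i.val (ZMod.val_lt i)
    rw [hc, ZMod.natCast_rightInverse i, phi_coeff p i.val (ZMod.val_lt i)] at h1
    exact h1.symm

end Aux

section Ev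
variable (p : ℕ) [Fact p.Prime]

private noncomputable def zet : AdjoinRoot (Phi p) := AdjoinRoot.root (Phi p)

private noncomputable def Ev (x : ZMod p → ZMod 2) : AdjoinRoot (Phi p) :=
  AdjoinRoot.mk (Phi p) (qpoly p x)

lemma zet_pow_p : (zet p) ^ p = 1 := by
  have h : AdjoinRoot.mk (Phi p) (X ^ p - 1) = 0 :=
    AdjoinRoot.mk_eq_zero.2 (Polynomial.cyclotomic.dvd_X_pow_sub_one p (ZMod 2))
  rw [map_sub, map_pow, AdjoinRoot.mk_X, map_one, sub_eq_zero] at h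
  exact h

lemma zet_pow_mod (m : ℕ) : (zet p) ^ (m % p) = (zet p) ^ m := by
  conv_rhs => rw [← Nat.div_add_mod m p]
  rw [pow_add, pow_mul, zet_pow_p, one_pow, one_mul]

lemma zet_pow_val_add (a b : ZMod p) :
    (zet p) ^ (a + b).val = (zet p) ^ a.val * (zet p) ^ b.val := by
  rw [← pow_add, ← zet_pow_mod p (a.val + b.val), ← ZMod.val_add]

/-- shift of a vector by `k`. -/
def shf (k : ZMod p) (x : ZMod p → ZMod 2) : ZMod p → ZMod 2 := fun i => x (i - k)

lemma shf_shf (k l : ZMod p) (x : ZMod p → ZMod 2) :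
    shf p l (shf p k x) = shf p (k + l) x := by
  funext i; simp only [shf]; ring_nf

lemma shf_zero (x : ZMod p → ZMod 2) : shf p 0 x = x := by
  funext i; simp [shf]

lemma shf_sum (k : ZMod p) (x : ZMod p → ZMod 2) : ∑ i, shf p k x i = ∑ i, x i :=
  Fintype.sum_equiv (Equiv.subRight k) _ _ (fun _ => rfl)

lemma Ev_add (x y : ZMod p → ZMod 2) : Ev p (x + y) = Ev p x + Ev p y := by
  rw [Ev, Ev, Ev, qpoly_add, map_add]

lemma Ev_shf (k : ZMod p) (x : ZMod p → ZMod 2) :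
    Ev p (shf p k x) = (zet p) ^ k.val * Ev p x := by
  rw [Ev, Ev, qpoly, qpoly, map_sum, map_sum, Finset.mul_sum]
  refine Fintype.sum_equiv (Equiv.subRight k) _ _ fun j => ?_
  simp only [Equiv.subRight_apply, map_mul, map_pow, AdjoinRoot.mk_X, shf, zet]
  have h1 : (AdjoinRoot.root (Phi p)) ^ (j.val)
      = (AdjoinRoot.root (Phi p)) ^ (k.val) * (AdjoinRoot.root (Phi p)) ^ ((j - k).val) := by
    conv_lhs => rw [show j = k + (j - k) by ring]
    rw [← zet, zet_pow_val_add]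
  rw [h1]
  ring

/-- the evaluation of the indicator vector of `S`. -/
lemma Ev_indicator (S : Finset (ZMod p)) [DecidablePred (· ∈ S)] :
    Ev p (fun i => if i ∈ S then 1 else 0) = ∑ k ∈ S, (zet p) ^ k.val := by
  rw [Ev, qpoly, map_sum]
  rw [← Finset.sum_filter_add_sum_filter_not univ (· ∈ S)]
  have h2 : ∀ i ∈ univ.filter (¬ · ∈ S),
      AdjoinRoot.mk (Phi p) (Polynomial.C (if i ∈ S then (1:ZMod 2) else 0) * X ^ i.val) = 0 := by
    intro i hi
    rw [Finset.mem_filter] at hi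
    rw [if_neg hi.2, Polynomial.C_0, zero_mul, map_zero]
  rw [Finset.sum_eq_zero h2, add_zero]
  rw [Finset.filter_mem_eq_inter, Finset.univ_inter]
  refine Finset.sum_congr rfl fun k hk => ?_
  rw [if_pos hk, Polynomial.C_1, one_mul, map_pow, AdjoinRoot.mk_X, zet]

end Ev

section Transfer
variable (p : ℕ) [Fact p.Prime]

lemma sum_zmod_range {M : Type*} [AddCommMonoid M] (f : ZMod p → M) :
    ∑ i, f i = ∑ m ∈ Finset.range p, f (m : ZMod p) := by
  refine Finset.sum_nbij' (fun a => a.val) (fun m => (m : ZMod p)) ?_ ?_ ?_ ?_ ?_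
  · intro a _; exact Finset.mem_range.2 (ZMod.val_lt a)
  · intro m _; exact Finset.mem_univ _
  · intro a _; exact ZMod.natCast_rightInverse a
  · intro m hm; exact ZMod.val_cast_of_lt (Finset.mem_range.1 hm)
  · intro a _
    rw [ZMod.natCast_rightInverse a]

/-- restriction to the first `p-1` coordinates. -/
def psi (x : ZMod p → ZMod 2) : Fin (p - 1) → ZMod 2 := fun j => x ((j.val : ℕ) : ZMod p)

/-- extension by the parity coordinate. -/
def phiv (y : Fin (p - 1) → ZMod 2) : ZMod p → ZMod 2 :=
  fun i => if h : i.val < p - 1 then y ⟨i.val, h⟩ else ∑ j, y j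

lemma sum_split (x : ZMod p → ZMod 2) :
    ∑ i, x i = (∑ j : Fin (p - 1), psi p x j) + x (((p - 1 : ℕ) : ZMod p)) := by
  have hp0 : 0 < p := (Fact.out : p.Prime).pos
  have hr : Finset.range p = insert (p - 1) (Finset.range (p - 1)) := by
    conv_lhs => rw [show p = p - 1 + 1 by omega]
    rw [Finset.range_add_one]
  rw [sum_zmod_range, hr, Finset.sum_insert Finset.notMem_range_self,
    Finset.sum_range fun m => x ((m : ℕ) : ZMod p), add_comm]
  rfl

lemma psi_add (x y : ZMod p → ZMod 2) : psi p (x + y) = psi p x + psi p y := rfl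

lemma psi_phiv (y : Fin (p - 1) → ZMod 2) : psi p (phiv p y) = y := by
  funext j
  have hj : j.val < p - 1 := j.isLt
  have hjp : j.val < p := by omega
  have hval : (((j.val : ℕ) : ZMod p)).val = j.val := ZMod.val_cast_of_lt hjp
  simp only [psi, phiv]
  rw [dif_pos (by rw [hval]; exact hj)]
  exact congrArg y (Fin.ext hval)

lemma phiv_sum (y : Fin (p - 1) → ZMod 2) : ∑ i, phiv p y i = 0 := by
  rw [sum_split]
  have h1 : psi p (phiv p y) = y := psi_phiv p y
  rw [h1]
  have hp0 : 0 < p := (Fact.out : p.Prime).pos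
  have hlt : ¬ (((p - 1 : ℕ) : ZMod p)).val < p - 1 := by
    rw [ZMod.val_cast_of_lt (by omega : p - 1 < p)]
    omega
  rw [phiv, dif_neg hlt]
  exact zmod2_add_self _

lemma phiv_psi (x : ZMod p → ZMod 2) (hx : ∑ i, x i = 0) : phiv p (psi p x) = x := by
  have hp0 : 0 < p := (Fact.out : p.Prime).pos
  funext i
  by_cases h : i.val < p - 1
  · rw [phiv, dif_pos h]
    exact congrArg x (by
      conv_rhs => rw [← ZMod.natCast_rightInverse i])
  · have hival : i.val = p - 1 := by have := ZMod.val_lt i; omega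
    have hi : i = ((p - 1 : ℕ) : ZMod p) := by
      conv_lhs => rw [← ZMod.natCast_rightInverse i]
      rw [hival]
    rw [phiv, dif_neg h]
    have hs := sum_split p x
    rw [hx, ← hi] at hs
    have h2 := zmod2_add_self (x i)
    calc ∑ j, psi p x j = (∑ j, psi p x j) + (x i + x i) := by rw [h2, add_zero]
      _ = ((∑ j, psi p x j) + x i) + x i := by ring
      _ = 0 + x i := by rw [← hs]
      _ = x i := zero_add _

lemma phiv_zero : phiv p 0 = 0 := by
  funext i
  by_cases h : i.val < p - 1
  · rw [phiv, dif_pos h]; rfl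
  · rw [phiv, dif_neg h]; simp

lemma psi_inj (x y : ZMod p → ZMod 2) (hx : ∑ i, x i = 0) (hy : ∑ i, y i = 0)
    (h : psi p x = psi p y) : x = y := by
  rw [← phiv_psi p x hx, ← phiv_psi p y hy, h]

lemma card_sumzero :
    (univ.filter (fun x : ZMod p → ZMod 2 => ∑ i, x i = 0)).card = 2 ^ (p - 1) := by
  rw [show (2:ℕ) ^ (p-1) = Fintype.card (Fin (p - 1) → ZMod 2) by simp [Fintype.card_fun]]
  rw [← Finset.card_univ]
  refine Finset.card_bij' (fun x _ => psi p x) (fun y _ => phiv p y) ?_ ?_ ?_ ?_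
  · intro a _; exact mem_univ _
  · intro y _; rw [mem_filter]; exact ⟨mem_univ _, phiv_sum p y⟩
  · intro a ha; exact phiv_psi p a ((mem_filter.1 ha).2)
  · intro y _; exact psi_phiv p y

end Transfer

section Orbits
variable (p : ℕ) [Fact p.Prime]

lemma qpoly_zero : qpoly p 0 = 0 := by
  rw [qpoly]
  refine Finset.sum_eq_zero fun i _ => ?_
  simp

private noncomputable def EvHom : (ZMod p → ZMod 2) →+ AdjoinRoot (Phi p) where
  toFun := Ev p
  map_zero' := by rw [Ev, qpoly_zero, map_zero]
  map_add' := Ev_add p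

lemma cast_p2 (hodd : Odd p) : ((p : ℕ) : ZMod 2) = 1 := by
  rw [← ZMod.natCast_mod, Nat.odd_iff.1 hodd, Nat.cast_one]

lemma sum_ones (hodd : Odd p) : ∑ _i : ZMod p, (1 : ZMod 2) = 1 := by
  rw [Finset.sum_const, Finset.card_univ, ZMod.card, nsmul_eq_mul, mul_one, cast_p2 p hodd]

lemma Ev_ne_zero (hodd : Odd p) (x : ZMod p → ZMod 2) (hx0 : x ≠ 0)
    (hxs : ∑ i, x i = 0) : Ev p x ≠ 0 := by
  intro h
  rw [Ev, AdjoinRoot.mk_eq_zero] at h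
  rcases qpoly_dvd p x h with h1 | h1
  · exact hx0 h1
  · rw [h1] at hxs
    rw [sum_ones p hodd] at hxs
    exact one_ne_zero hxs

variable [Fact (Irreducible (Phi p))]

lemma zet_ne_one (hodd : Odd p) : zet p ≠ 1 := by
  have hp : p.Prime := Fact.out
  have hne2 : p ≠ 2 := by rintro rfl; exact (by decide : ¬ Odd 2) hodd
  have hp3 : 3 ≤ p := by have := hp.two_le; omega
  intro h
  have h0 : AdjoinRoot.mk (Phi p) (X - 1) = 0 := by
    rw [map_sub, AdjoinRoot.mk_X, map_one, ← zet, h, sub_self]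
  rw [AdjoinRoot.mk_eq_zero] at h0
  have hXne : (X - 1 : (ZMod 2)[X]) ≠ 0 := by
    rw [show (X - 1 : (ZMod 2)[X]) = X - Polynomial.C 1 by rw [Polynomial.C_1]]
    exact Polynomial.X_sub_C_ne_zero 1
  have := Polynomial.natDegree_le_of_dvd h0 hXne
  rw [phi_natDegree] at this
  have hdeg : (X - 1 : (ZMod 2)[X]).natDegree = 1 := by
    rw [show (X - 1 : (ZMod 2)[X]) = X - Polynomial.C 1 by rw [Polynomial.C_1]]
    exact Polynomial.natDegree_X_sub_C 1
  omega

lemma orderOf_zet (hodd : Odd p) : orderOf (zet p) = p :=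
  orderOf_eq_prime (zet_pow_p p) (zet_ne_one p hodd)

lemma zet_pow_val_eq_one (hodd : Odd p) {k : ZMod p} (h : zet p ^ k.val = 1) : k = 0 := by
  have h1 : orderOf (zet p) ∣ k.val := orderOf_dvd_of_pow_eq_one h
  rw [orderOf_zet p hodd] at h1
  have h2 := ZMod.val_lt k
  have h3 : k.val = 0 := by
    rcases Nat.eq_zero_or_pos k.val with h4 | h4
    · exact h4
    · exact absurd (Nat.le_of_dvd h4 h1) (by omega)
  exact (ZMod.val_eq_zero k).1 h3

lemma shf_eq_self (hodd : Odd p) {x : ZMod p → ZMod 2} (hx0 : x ≠ 0)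
    (hxs : ∑ i, x i = 0) {k : ZMod p} (h : shf p k x = x) : k = 0 := by
  have hE : Ev p x = zet p ^ k.val * Ev p x := by
    conv_lhs => rw [← h, Ev_shf]
  have h2 : (zet p ^ k.val - 1) * Ev p x = 0 := by
    rw [sub_mul, one_mul, ← hE, sub_self]
  rcases mul_eq_zero.1 h2 with h3 | h3
  · exact zet_pow_val_eq_one p hodd (by rwa [sub_eq_zero] at h3)
  · exact absurd h3 (Ev_ne_zero p hodd x hx0 hxs)

lemma shf_injective (hodd : Odd p) {x : ZMod p → ZMod 2} (hx0 : x ≠ 0)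
    (hxs : ∑ i, x i = 0) : Function.Injective (fun k : ZMod p => shf p k x) := by
  intro k l h
  simp only at h
  have h2 : shf p (k - l) x = x := by
    funext i
    have h3 := congrFun h (i + l)
    simp only [shf] at h3 ⊢
    rw [show i + l - k = i - (k - l) by ring, show i + l - l = i by ring] at h3
    exact h3
  exact sub_eq_zero.1 (shf_eq_self p hodd hx0 hxs h2)

/-- orbit of `x` under cyclic shifts. -/
noncomputable def orb (x : ZMod p → ZMod 2) : Finset (ZMod p → ZMod 2) :=
  univ.image (fun k => shf p k x)

omit [Fact (Irreducible (Phi p))] in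
lemma mem_orb {x y : ZMod p → ZMod 2} : y ∈ orb p x ↔ ∃ k, shf p k x = y := by
  simp [orb]

omit [Fact (Irreducible (Phi p))] in
lemma mem_orb_self (x : ZMod p → ZMod 2) : x ∈ orb p x :=
  (mem_orb p).2 ⟨0, shf_zero p x⟩

omit [Fact (Irreducible (Phi p))] in
lemma orb_eq_of_mem {x y : ZMod p → ZMod 2} (h : y ∈ orb p x) : orb p y = orb p x := by
  obtain ⟨k, rfl⟩ := (mem_orb p).1 h
  ext z
  rw [mem_orb, mem_orb]
  constructor
  · rintro ⟨l, rfl⟩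
    exact ⟨k + l, (shf_shf p k l x).symm⟩
  · rintro ⟨m, rfl⟩
    exact ⟨m - k, by rw [shf_shf, show k + (m - k) = m by ring]⟩

omit [Fact (Irreducible (Phi p))] in
lemma shf_ne_zero {x : ZMod p → ZMod 2} (hx0 : x ≠ 0) (k : ZMod p) : shf p k x ≠ 0 := by
  intro h
  apply hx0
  have h1 : shf p (-k) (shf p k x) = x := by
    rw [shf_shf, show k + -k = (0:ZMod p) by ring, shf_zero]
  rw [h] at h1
  rw [← h1]
  rfl

omit [Fact (Irreducible (Phi p))] in
lemma orb_subset_N {x : ZMod p → ZMod 2} (hx0 : x ≠ 0) (hxs : ∑ i, x i = 0) :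
    ∀ y ∈ orb p x, y ≠ 0 ∧ ∑ i, y i = 0 := by
  intro y hy
  obtain ⟨k, rfl⟩ := (mem_orb p).1 hy
  exact ⟨shf_ne_zero p hx0 k, by rw [shf_sum]; exact hxs⟩

lemma orb_card (hodd : Odd p) {x : ZMod p → ZMod 2} (hx0 : x ≠ 0) (hxs : ∑ i, x i = 0) :
    (orb p x).card = p := by
  rw [orb, Finset.card_image_of_injective _ (shf_injective p hodd hx0 hxs),
    Finset.card_univ, ZMod.card]

omit [Fact (Irreducible (Phi p))] in
lemma orb_sum {x : ZMod p → ZMod 2} (hxs : ∑ i, x i = 0) (hx0 : x ≠ 0)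
    (hinj : Function.Injective (fun k : ZMod p => shf p k x)) :
    ∑ y ∈ orb p x, y = 0 := by
  rw [orb, Finset.sum_image (fun a _ b _ h => hinj h)]
  funext i
  rw [Finset.sum_apply, Pi.zero_apply]
  have : ∑ k : ZMod p, x (i - k) = ∑ j : ZMod p, x j :=
    Fintype.sum_equiv (Equiv.subLeft i) _ _ (fun _ => rfl)
  exact this.trans hxs

lemma orb_minimal (hodd : Odd p) {x : ZMod p → ZMod 2} (hx0 : x ≠ 0)
    (hxs : ∑ i, x i = 0) (D : Finset (ZMod p → ZMod 2)) (hD : D ⊆ orb p x)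
    (hDne : D.Nonempty) (hDsum : ∑ y ∈ D, y = 0) : D = orb p x := by
  classical
  set S : Finset (ZMod p) := univ.filter (fun k => shf p k x ∈ D) with hS
  have hinj := shf_injective p hodd hx0 hxs
  have hDS : D = S.image (fun k => shf p k x) := by
    ext z
    simp only [Finset.mem_image, hS, Finset.mem_filter, Finset.mem_univ, true_and]
    constructor
    · intro hz
      obtain ⟨k, rfl⟩ := (mem_orb p).1 (hD hz)
      exact ⟨k, hz, rfl⟩
    · rintro ⟨k, hk, rfl⟩
      exact hk
  have hSne : S.Nonempty := by
    obtain ⟨d, hd⟩ := hDne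
    obtain ⟨k, rfl⟩ := (mem_orb p).1 (hD hd)
    exact ⟨k, by simp [hS, hd]⟩
  have hsum2 : ∑ k ∈ S, shf p k x = 0 := by
    rw [hDS, Finset.sum_image (fun a _ b _ h => hinj h)] at hDsum
    exact hDsum
  have hEv : (∑ k ∈ S, (zet p) ^ k.val) * Ev p x = 0 := by
    have h1 : Ev p (∑ k ∈ S, shf p k x) = 0 := by rw [hsum2]; exact (EvHom p).map_zero
    rw [show Ev p (∑ k ∈ S, shf p k x) = (EvHom p) (∑ k ∈ S, shf p k x) from rfl,
      map_sum] at h1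
    have h2 : ∀ k ∈ S, (EvHom p) (shf p k x) = (zet p) ^ k.val * Ev p x := fun k _ => Ev_shf p k x
    rw [Finset.sum_congr rfl h2, ← Finset.sum_mul] at h1
    exact h1
  have hind : Ev p (fun i => if i ∈ S then (1 : ZMod 2) else 0) = 0 := by
    rw [Ev_indicator]
    rcases mul_eq_zero.1 hEv with h | h
    · exact h
    · exact absurd h (Ev_ne_zero p hodd x hx0 hxs)
  rw [Ev, AdjoinRoot.mk_eq_zero] at hind
  rcases qpoly_dvd p _ hind with h | h
  · obtain ⟨k, hk⟩ := hSne
    have := congrFun h k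
    rw [if_pos hk] at this
    exact absurd this one_ne_zero
  · have hSuniv : S = univ := by
      refine Finset.eq_univ_of_forall fun k => ?_
      by_contra hk
      have := congrFun h k
      rw [if_neg hk] at this
      exact zero_ne_one this
    rw [hDS, hSuniv]
    rfl

end Orbits

section PartA
variable (p : ℕ) [Fact p.Prime]

noncomputable def NN : Finset (ZMod p → ZMod 2) :=
  Finset.univ.filter (fun x : ZMod p → ZMod 2 => x ≠ 0 ∧ ∑ i, x i = 0)

noncomputable def CCfam : Finset (Finset (ZMod p → ZMod 2)) := (NN p).image (orb p)

lemma mem_NN {x : ZMod p → ZMod 2} : x ∈ NN p ↔ x ≠ 0 ∧ ∑ i, x i = 0 := by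
  simp [NN]

variable [Fact (Irreducible (Phi p))]

lemma CC_circuit (hodd : Odd p) {C : Finset (ZMod p → ZMod 2)} (hC : C ∈ CCfam p) :
    IsCircuit C := by
  obtain ⟨x, hx, rfl⟩ := Finset.mem_image.1 hC
  obtain ⟨hx0, hxs⟩ := (mem_NN p).1 hx
  refine ⟨⟨x, mem_orb_self p x⟩, ?_, ?_, ?_⟩
  · intro h0
    exact (orb_subset_N p hx0 hxs 0 h0).1 rfl
  · exact orb_sum p hxs hx0 (shf_injective p hodd hx0 hxs)
  · intro D hD hDne hDsum
    exact orb_minimal p hodd hx0 hxs D hD hDne hDsum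

lemma CC_card_each (hodd : Odd p) {C : Finset (ZMod p → ZMod 2)} (hC : C ∈ CCfam p) :
    C.card = p := by
  obtain ⟨x, hx, rfl⟩ := Finset.mem_image.1 hC
  obtain ⟨hx0, hxs⟩ := (mem_NN p).1 hx
  exact orb_card p hodd hx0 hxs

lemma CC_disjoint {C D : Finset (ZMod p → ZMod 2)} (hC : C ∈ CCfam p) (hD : D ∈ CCfam p)
    (hne : C ≠ D) : Disjoint C D := by
  obtain ⟨x, hx, rfl⟩ := Finset.mem_image.1 hC
  obtain ⟨y, hy, rfl⟩ := Finset.mem_image.1 hD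
  rw [Finset.disjoint_left]
  intro z hzx hzy
  exact hne ((orb_eq_of_mem p hzx).symm.trans (orb_eq_of_mem p hzy))

lemma CC_biUnion : (CCfam p).biUnion id = NN p := by
  ext z
  rw [Finset.mem_biUnion]
  constructor
  · rintro ⟨C, hC, hz⟩
    obtain ⟨x, hx, rfl⟩ := Finset.mem_image.1 hC
    obtain ⟨hx0, hxs⟩ := (mem_NN p).1 hx
    exact (mem_NN p).2 (orb_subset_N p hx0 hxs z hz)
  · intro hz
    exact ⟨orb p z, Finset.mem_image_of_mem _ hz, mem_orb_self p z⟩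

lemma NN_card : (NN p).card = 2 ^ (p - 1) - 1 := by
  have h : NN p = (univ.filter (fun x : ZMod p → ZMod 2 => ∑ i, x i = 0)).erase 0 := by
    ext x
    rw [mem_NN, Finset.mem_erase, Finset.mem_filter]
    simp only [Finset.mem_univ, true_and]
  rw [h, Finset.card_erase_of_mem (by simp), card_sumzero]

lemma CC_count (hodd : Odd p) : (CCfam p).card = (2 ^ (p - 1) - 1) / p := by
  have hp0 : 0 < p := (Fact.out : p.Prime).pos
  have h2 := Finset.card_biUnion (s := CCfam p) (t := id)
    (fun C hC D hD hne => CC_disjoint p hC hD hne)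
  have h1 : (NN p).card = (CCfam p).card * p := by
    rw [← CC_biUnion p, h2,
      Finset.sum_congr rfl (fun C hC => (CC_card_each p hodd hC : (id C).card = p)),
      Finset.sum_const, smul_eq_mul]
  calc (CCfam p).card = (CCfam p).card * p / p := (Nat.mul_div_cancel _ hp0).symm
    _ = (NN p).card / p := by rw [← h1]
    _ = (2 ^ (p - 1) - 1) / p := by rw [NN_card]

end PartA

section PartB
variable (p : ℕ) [Fact p.Prime]

lemma psi_sum (D : Finset (ZMod p → ZMod 2)) :
    ∑ a ∈ D, psi p a = psi p (∑ a ∈ D, a) := by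
  funext j
  rw [Finset.sum_apply]
  show ∑ a ∈ D, a ((j.val : ℕ) : ZMod p) = (∑ a ∈ D, a) ((j.val : ℕ) : ZMod p)
  rw [Finset.sum_apply]

lemma psi_zero : psi p 0 = 0 := rfl

lemma sum_coords_sum (D : Finset (ZMod p → ZMod 2))
    (hD : ∀ v ∈ D, ∑ i, v i = 0) : ∑ i, (∑ v ∈ D, v) i = 0 := by
  have h1 : ∀ i : ZMod p, (∑ v ∈ D, v) i = ∑ v ∈ D, v i := fun i => Finset.sum_apply i D _
  calc ∑ i, (∑ v ∈ D, v) i = ∑ i, ∑ v ∈ D, v i := by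
        exact Finset.sum_congr rfl fun i _ => h1 i
    _ = ∑ v ∈ D, ∑ i, v i := Finset.sum_comm
    _ = 0 := Finset.sum_eq_zero fun v hv => hD v hv

lemma image_psi_circuit {C : Finset (ZMod p → ZMod 2)}
    (hC : ∀ y ∈ C, y ≠ 0 ∧ ∑ i, y i = 0) (hcirc : IsCircuit C) :
    IsCircuit (C.image (psi p)) := by
  classical
  have hinj : ∀ a ∈ C, ∀ b ∈ C, psi p a = psi p b → a = b := fun a ha b hb h =>
    psi_inj p a b (hC a ha).2 (hC b hb).2 h
  obtain ⟨hne, h0, hsum, hmin⟩ := hcirc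
  refine ⟨hne.image _, ?_, ?_, ?_⟩
  · intro h
    obtain ⟨a, ha, ha0⟩ := Finset.mem_image.1 h
    have : a = 0 := by
      rw [← phiv_psi p a (hC a ha).2, ha0, phiv_zero]
    exact (hC a ha).1 this
  · rw [Finset.sum_image hinj, psi_sum, hsum, psi_zero]
  · intro D hD hDne hDsum
    set D' : Finset (ZMod p → ZMod 2) := C.filter (fun v => psi p v ∈ D) with hD'
    have hD'sub : D' ⊆ C := Finset.filter_subset _ _
    have himg : D'.image (psi p) = D := by
      ext d
      constructor
      · intro hd
        obtain ⟨v, hv, rfl⟩ := Finset.mem_image.1 hd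
        exact (Finset.mem_filter.1 hv).2
      · intro hd
        obtain ⟨c, hc, rfl⟩ := Finset.mem_image.1 (hD hd)
        exact Finset.mem_image_of_mem _ (Finset.mem_filter.2 ⟨hc, hd⟩)
    have hD'ne : D'.Nonempty := by
      obtain ⟨d, hd⟩ := hDne
      obtain ⟨c, hc, rfl⟩ := Finset.mem_image.1 (hD hd)
      exact ⟨c, Finset.mem_filter.2 ⟨hc, hd⟩⟩
    have hD'sum : ∑ v ∈ D', v = 0 := by
      have h4 : ∑ a ∈ D', psi p a = ∑ d ∈ D, d := by
        rw [← himg, Finset.sum_image (fun a ha b hb h => hinj a (hD'sub ha) b (hD'sub hb) h)]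
      have hψ : psi p (∑ v ∈ D', v) = 0 := by
        rw [← psi_sum, h4, hDsum]
      have hcoords : ∑ i, (∑ v ∈ D', v) i = 0 :=
        sum_coords_sum p D' (fun v hv => (hC v (hD'sub hv)).2)
      rw [← phiv_psi p _ hcoords, hψ, phiv_zero]
    rw [← himg, hmin D' hD'sub hD'ne hD'sum]

lemma w_add_self (z : Fin (p - 1) → ZMod 2) : z + z = 0 := by
  funext i; exact zmod2_add_self (z i)

lemma circuit_card_le {C : Finset (Fin (p - 1) → ZMod 2)} (hcirc : IsCircuit C) :
    C.card ≤ p := by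
  classical
  have hp0 : 0 < p := (Fact.out : p.Prime).pos
  by_contra hlt
  push_neg at hlt
  obtain ⟨hne, h0, hsum, hmin⟩ := hcirc
  obtain ⟨c, hc⟩ := hne
  set E := C.erase c with hE
  have hEcard : p ≤ E.card := by
    rw [hE, Finset.card_erase_of_mem hc]
    omega
  have hcards : Fintype.card (Fin (p - 1) → ZMod 2) < E.powerset.card := by
    rw [Finset.card_powerset]
    calc Fintype.card (Fin (p - 1) → ZMod 2) = 2 ^ (p - 1) := by simp [Fintype.card_fun]
      _ < 2 ^ E.card := Nat.pow_lt_pow_right (by norm_num) (by omega)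
  obtain ⟨A, hA, B, hB, hAB, hABsum⟩ :=
    Finset.exists_ne_map_eq_of_card_lt_of_maps_to
      (s := E.powerset) (t := (univ : Finset (Fin (p - 1) → ZMod 2)))
      (f := fun A => ∑ v ∈ A, v)
      (by rw [Finset.card_univ]; exact hcards)
      (fun A _ => Finset.mem_univ _)
  rw [Finset.mem_powerset] at hA hB
  set T := (A ∪ B) \ (A ∩ B) with hT
  have hTne : T.Nonempty := by
    rw [Finset.nonempty_iff_ne_empty]
    intro h
    apply hAB
    have hsub : A ∪ B ⊆ A ∩ B := by
      intro z hz
      by_contra hz2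
      exact Finset.notMem_empty z (h ▸ Finset.mem_sdiff.2 ⟨hz, hz2⟩)
    have h1 : A ⊆ B := fun z hz => (Finset.mem_inter.1 (hsub (Finset.mem_union_left _ hz))).2
    have h2 : B ⊆ A := fun z hz => (Finset.mem_inter.1 (hsub (Finset.mem_union_right _ hz))).1
    exact Finset.Subset.antisymm h1 h2
  have hTsum : ∑ v ∈ T, v = 0 := by
    have h1 : ∑ v ∈ A ∪ B, v + ∑ v ∈ A ∩ B, v = ∑ v ∈ A, v + ∑ v ∈ B, v :=
      Finset.sum_union_inter
    have h2 : ∑ v ∈ T, v + ∑ v ∈ A ∩ B, v = ∑ v ∈ A ∪ B, v :=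
      Finset.sum_sdiff (Finset.inter_subset_union)
    have h3 : ∑ v ∈ T, v + (∑ v ∈ A ∩ B, v + ∑ v ∈ A ∩ B, v)
        = ∑ v ∈ A, v + ∑ v ∈ B, v := by
      rw [← add_assoc, h2, h1]
    rw [w_add_self, add_zero, ← hABsum, w_add_self] at h3
    exact h3
  have hTC : T ⊆ C := by
    intro z hz
    have := (Finset.mem_sdiff.1 hz).1
    rcases Finset.mem_union.1 this with h | h
    · exact (Finset.erase_subset _ _) (hA h)
    · exact (Finset.erase_subset _ _) (hB h)
  have := hmin T hTC hTne hTsum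
  have hcT : c ∉ T := by
    intro h
    have := (Finset.mem_sdiff.1 h).1
    rcases Finset.mem_union.1 this with h' | h'
    · exact Finset.notMem_erase c C (hA h')
    · exact Finset.notMem_erase c C (hB h')
  exact hcT (this ▸ hc)

end PartB

section PartB2
variable (p : ℕ) [Fact p.Prime] [Fact (Irreducible (Phi p))]

noncomputable def CC' : Finset (Finset (Fin (p - 1) → ZMod 2)) :=
  (CCfam p).image (Finset.image (psi p))

lemma CC_members {C : Finset (ZMod p → ZMod 2)} (hC : C ∈ CCfam p) :
    ∀ y ∈ C, y ≠ 0 ∧ ∑ i, y i = 0 := by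
  obtain ⟨x, hx, rfl⟩ := Finset.mem_image.1 hC
  obtain ⟨hx0, hxs⟩ := (mem_NN p).1 hx
  exact orb_subset_N p hx0 hxs

lemma CC'_circuits (hodd : Odd p) : ∀ C' ∈ CC' p, IsCircuit C' := by
  intro C' hC'
  obtain ⟨C, hC, rfl⟩ := Finset.mem_image.1 hC'
  exact image_psi_circuit p (CC_members p hC) (CC_circuit p hodd hC)

lemma psi_eq_members {C D : Finset (ZMod p → ZMod 2)} (hC : C ∈ CCfam p) (hD : D ∈ CCfam p)
    {c d : ZMod p → ZMod 2} (hc : c ∈ C) (hd : d ∈ D) (h : psi p c = psi p d) : c = d :=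
  psi_inj p c d (CC_members p hC c hc).2 (CC_members p hD d hd).2 h

lemma CC'_disjoint : ∀ C' ∈ CC' p, ∀ D' ∈ CC' p, C' ≠ D' → Disjoint C' D' := by
  intro C' hC' D' hD' hne
  obtain ⟨C, hC, rfl⟩ := Finset.mem_image.1 hC'
  obtain ⟨D, hD, rfl⟩ := Finset.mem_image.1 hD'
  have hCD : C ≠ D := by rintro rfl; exact hne rfl
  rw [Finset.disjoint_left]
  intro z hzC hzD
  obtain ⟨c, hc, rfl⟩ := Finset.mem_image.1 hzC
  obtain ⟨d, hd, hdc⟩ := Finset.mem_image.1 hzD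
  have : d = c := psi_eq_members p hD hC hd hc hdc
  subst this
  exact (Finset.disjoint_left.1 (CC_disjoint p hC hD hCD) hc) hd

lemma psi_ne_zero {c : ZMod p → ZMod 2} (hc0 : c ≠ 0) (hcs : ∑ i, c i = 0) :
    psi p c ≠ 0 := by
  intro h
  apply hc0
  rw [← phiv_psi p c hcs, h, phiv_zero]

lemma CC'_biUnion : (CC' p).biUnion id =
    Finset.univ.filter (fun y : Fin (p - 1) → ZMod 2 => y ≠ 0) := by
  ext y
  rw [Finset.mem_biUnion, Finset.mem_filter]
  constructor
  · rintro ⟨C', hC', hy⟩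
    obtain ⟨C, hC, rfl⟩ := Finset.mem_image.1 hC'
    obtain ⟨c, hc, rfl⟩ := Finset.mem_image.1 hy
    obtain ⟨hc0, hcs⟩ := CC_members p hC c hc
    exact ⟨Finset.mem_univ _, psi_ne_zero p hc0 hcs⟩
  · rintro ⟨-, hy0⟩
    set x := phiv p y with hx
    have hxs : ∑ i, x i = 0 := phiv_sum p y
    have hx0 : x ≠ 0 := by
      intro h
      apply hy0
      rw [← psi_phiv p y, ← hx, h, psi_zero]
    have hxN : x ∈ NN p := (mem_NN p).2 ⟨hx0, hxs⟩
    refine ⟨(orb p x).image (psi p), Finset.mem_image_of_mem _ (Finset.mem_image_of_mem _ hxN), ?_⟩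
    have : y = psi p x := (psi_phiv p y).symm
    rw [this]
    exact Finset.mem_image_of_mem _ (mem_orb_self p x)

lemma CC'_card : (CC' p).card = (CCfam p).card := by
  rw [CC', Finset.card_image_of_injOn]
  intro C hC D hD h
  have h1 : C ⊆ D := by
    intro c hc
    have : psi p c ∈ D.image (psi p) := h ▸ Finset.mem_image_of_mem _ hc
    obtain ⟨d, hd, hdc⟩ := Finset.mem_image.1 this
    rwa [psi_eq_members p hD hC hd hc hdc] at hd
  have h2 : D ⊆ C := by
    intro d hd
    have : psi p d ∈ C.image (psi p) := h.symm ▸ Finset.mem_image_of_mem _ hd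
    obtain ⟨c, hc, hcd⟩ := Finset.mem_image.1 this
    rwa [psi_eq_members p hC hD hc hd hcd] at hc
  exact Finset.Subset.antisymm h1 h2

omit [Fact (Irreducible (Phi p))] in
lemma M'_card : (Finset.univ.filter (fun y : Fin (p - 1) → ZMod 2 => y ≠ 0)).card
    = 2 ^ (p - 1) - 1 := by
  have h : Finset.univ.filter (fun y : Fin (p - 1) → ZMod 2 => y ≠ 0)
      = Finset.univ.erase 0 := by
    ext y
    simp [Finset.mem_erase]
  rw [h, Finset.card_erase_of_mem (Finset.mem_univ _), Finset.card_univ]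
  simp [Fintype.card_fun]

omit [Fact (Irreducible (Phi p))] in
lemma lower_bound (𝒯 : Finset (Finset (Fin (p - 1) → ZMod 2)))
    (hpart : IsCircuitPartition
      (Finset.univ.filter (fun y : Fin (p - 1) → ZMod 2 => y ≠ 0)) 𝒯) :
    2 ^ (p - 1) - 1 ≤ 𝒯.card * p := by
  have h2 := Finset.card_biUnion (s := 𝒯) (t := id) hpart.2.1
  have h3 : ∑ C ∈ 𝒯, (id C).card ≤ 𝒯.card * p := by
    calc ∑ C ∈ 𝒯, (id C).card ≤ 𝒯.card • p :=
          Finset.sum_le_card_nsmul 𝒯 _ p (fun C hC => circuit_card_le p (hpart.1 C hC))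
      _ = 𝒯.card * p := by rw [smul_eq_mul]
  rw [← M'_card p, ← hpart.2.2, h2]
  exact h3

end PartB2


lemma phi_irr (p : ℕ) [Fact p.Prime] (hodd : Odd p)
    (horder : orderOf (2 : ZMod p) = p - 1) :
    Irreducible (Polynomial.cyclotomic p (ZMod 2)) := by
  have hp : p.Prime := Fact.out
  have hne2 : p ≠ 2 := by rintro rfl; exact (by decide : ¬ Odd 2) hodd
  have hp3 : 3 ≤ p := by have := hp.two_le; omega
  set Φ : (ZMod 2)[X] := Polynomial.cyclotomic p (ZMod 2) with hΦ
  have hΦmonic : Φ.Monic := cyclotomic.monic p (ZMod 2)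
  have hΦdeg : Φ.natDegree = p - 1 := by
    rw [hΦ, Polynomial.natDegree_cyclotomic, Nat.totient_prime hp]
  have hΦne : Φ ≠ 0 := hΦmonic.ne_zero
  obtain ⟨g, hgmonic, hgirr, hgdvd⟩ :=
    Φ.exists_monic_irreducible_factor (not_isUnit_of_natDegree_pos _ (by omega))
  have hg0 : g ≠ 0 := hgmonic.ne_zero
  haveI : Fact (Irreducible g) := ⟨hgirr⟩
  set K := AdjoinRoot g
  letI : Fintype K := Module.fintypeOfFintype (AdjoinRoot.powerBasis hg0).basis
  have hcard : Fintype.card K = 2 ^ g.natDegree := by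
    rw [Module.card_eq_pow_finrank (K := ZMod 2), ZMod.card,
      (AdjoinRoot.powerBasis hg0).finrank, AdjoinRoot.powerBasis_dim]
  set ζ : K := AdjoinRoot.root g
  have hζp : ζ ^ p = 1 := by
    have h1 : (aeval ζ) (X ^ p - 1 : (ZMod 2)[X]) = 0 := by
      obtain ⟨q, hq⟩ := hgdvd.trans (cyclotomic.dvd_X_pow_sub_one p (ZMod 2))
      rw [hq, map_mul, AdjoinRoot.aeval_eq, AdjoinRoot.mk_self, zero_mul]
    have := h1
    rw [map_sub, map_pow, aeval_X, map_one, sub_eq_zero] at this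
    exact this
  have hζ1 : ζ ≠ 1 := by
    intro h
    have hroot : (aeval ζ) Φ = 0 := by
      obtain ⟨q, hq⟩ := hgdvd
      rw [hq, map_mul, AdjoinRoot.aeval_eq, AdjoinRoot.mk_self, zero_mul]
    rw [h, hΦ, cyclotomic_prime, map_sum] at hroot
    simp only [map_pow, aeval_X, one_pow, Finset.sum_const, card_range, nsmul_eq_mul, mul_one] at hroot
    have h2 : (2 : K) = 0 := by
      have h := map_natCast (algebraMap (ZMod 2) K) 2
      rw [show ((2:ℕ) : ZMod 2) = 0 by decide, map_zero] at h
      exact_mod_cast h.symm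
    obtain ⟨k, hk⟩ := hodd
    rw [hk] at hroot
    push_cast at hroot
    rw [h2, zero_mul, zero_add] at hroot
    exact one_ne_zero hroot
  have hordζ : orderOf ζ = p := orderOf_eq_prime hζp hζ1
  have hζ0 : ζ ≠ 0 := by
    intro h; rw [h, zero_pow hp.ne_zero] at hζp; exact zero_ne_one hζp
  set u : Kˣ := Units.mk0 ζ hζ0
  have hordu : orderOf u = p := by rw [← orderOf_units]; exact hordζ
  have hdvd : p ∣ 2 ^ g.natDegree - 1 := by
    have := orderOf_dvd_card (G := Kˣ) (x := u)
    rwa [hordu, Fintype.card_units, hcard] at this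
  have h2d : (2 : ZMod p) ^ g.natDegree = 1 := by
    have h1 : (1:ℕ) ≤ 2 ^ g.natDegree := Nat.one_le_two_pow
    have : ((2 ^ g.natDegree - 1 : ℕ) : ZMod p) = 0 := (ZMod.natCast_eq_zero_iff _ _).2 hdvd
    push_cast [Nat.cast_sub h1] at this
    rwa [sub_eq_zero] at this
  have hle : p - 1 ≤ g.natDegree := by
    have hdvd' : p - 1 ∣ g.natDegree := horder ▸ orderOf_dvd_of_pow_eq_one h2d
    have hpos : 0 < g.natDegree := hgirr.natDegree_pos
    exact Nat.le_of_dvd hpos hdvd'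
  have hge : g.natDegree ≤ p - 1 := hΦdeg ▸ Polynomial.natDegree_le_of_dvd hgdvd hΦne
  have hdeq : g.natDegree = Φ.natDegree := by omega
  -- conclude g = Φ
  obtain ⟨q, hq⟩ := hgdvd
  have hqne : q ≠ 0 := by rintro rfl; rw [mul_zero] at hq; exact hΦne hq
  have hdq : q.natDegree = 0 := by
    have := hq ▸ Polynomial.natDegree_mul hg0 hqne
    omega
  have hq1 : q = 1 := by
    have hc := Polynomial.eq_C_of_natDegree_eq_zero hdq
    have hl : Φ.leadingCoeff = g.leadingCoeff * q.leadingCoeff := by rw [hq, leadingCoeff_mul]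
    rw [hΦmonic.leadingCoeff, hgmonic.leadingCoeff, one_mul, leadingCoeff, hdq] at hl
    rw [hc, ← hl, Polynomial.C_1]
  rw [hq1, mul_one] at hq
  rw [hq]
  exact hgirr


/-- If `2` has multiplicative order `p-1` modulo the odd prime `p`, then the set
of nonzero even-weight vectors in `𝔽₂^p` can be partitioned into
`(2^{p-1} - 1)/p` circuits of size `p`; consequently the complete binary matroid
`𝔽₂^{p-1} \ {0}` satisfies `c(M) = (2^{p-1} - 1)/p`. -/
theorem complete_binary_matroid_decomposition (p : ℕ) [Fact p.Prime] (hodd : Odd p)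
    (horder : orderOf (2 : ZMod p) = p - 1) :
    (∃ 𝒞 : Finset (Finset (ZMod p → ZMod 2)),
      IsCircuitPartition (Finset.univ.filter
        (fun x : ZMod p → ZMod 2 => x ≠ 0 ∧ ∑ i, x i = 0)) 𝒞 ∧
      (∀ C ∈ 𝒞, C.card = p) ∧ 𝒞.card = (2 ^ (p - 1) - 1) / p) ∧
    circuitDecompNum (Finset.univ.filter (fun x : Fin (p - 1) → ZMod 2 => x ≠ 0)) =
      (2 ^ (p - 1) - 1) / p := by
  haveI : Fact (Irreducible (Phi p)) := ⟨phi_irr p hodd horder⟩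
  have hp0 : 0 < p := (Fact.out : p.Prime).pos
  constructor
  · refine ⟨CCfam p, ⟨fun C hC => CC_circuit p hodd hC,
      fun C hC D hD hne => CC_disjoint p hC hD hne, CC_biUnion p⟩,
      fun C hC => CC_card_each p hodd hC, CC_count p hodd⟩
  · have hmem : IsCircuitPartition
        (Finset.univ.filter (fun x : Fin (p - 1) → ZMod 2 => x ≠ 0)) (CC' p) ∧
        (CC' p).card = (2 ^ (p - 1) - 1) / p := by
      refine ⟨⟨CC'_circuits p hodd, CC'_disjoint p, CC'_biUnion p⟩, ?_⟩
      rw [CC'_card p, CC_count p hodd]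
    refine le_antisymm (Nat.sInf_le ⟨CC' p, hmem.1, hmem.2⟩) ?_
    refine le_csInf ⟨(2 ^ (p - 1) - 1) / p, CC' p, hmem.1, hmem.2⟩ ?_
    rintro t ⟨𝒯, hpart, rfl⟩
    have h1 := lower_bound p 𝒯 hpart
    calc (2 ^ (p - 1) - 1) / p ≤ 𝒯.card * p / p := Nat.div_le_div_right h1
      _ = 𝒯.card := Nat.mul_div_cancel _ hp0
end
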